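/- Let X, Z > 0, let 0 < α < 1 < σ, and let F : [0,∞) → ℂ be measurable, locally integrable, and satisfy F(u) = O(e^{−σu}) as u → +∞ (i.e. |F(u)| ≤ C e^{−σu} for some constant C and all sufficiently large u). Then, as ε → 0+, ∫₀^{∞}∫₀^{∞} exp(−ε(X e^{u₁} + Z e^{u₁+u₂})) F(u₂) e^{−α u₁} du₁ du₂ = (1/α) ∫₀^{∞} F(u) du + Γ(−α) ( ∫₀^{∞} (Z e^{u} + X)^{α} F(u) du ) ε^{α} + O(ε). -/

import Mathlib

/-!
After exchanging the order of integration and putting `t = ε (X + Z e^{u₂})`, the inner integral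
over `u₁` is
`G(t) = ∫₀^∞ exp(-t e^u) e^{-αu} du = t^α ∫_t^∞ e^{-v} v^{-α-1} dv`. One integration by parts
together with `Γ(1 - α) = -α Γ(-α)` gives `G(t) = 1/α + Γ(-α) t^α + E(t)` with `|E(t)| = O(t)`.
Since `t ≤ ε (X + Z) e^{u₂}` and `u ↦ e^u F(u)` is integrable on `(0, ∞)` (this is where `σ > 1`
enters), integrating `E` against `F` costs only `O(ε)`.
-/

open MeasureTheory Set Real Filter Topology

noncomputable def expExpIntegral (α t : ℝ) : ℝ :=
  ∫ u in Ioi (0:ℝ), exp (-(t * exp u)) * exp (-(α * u))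

lemma measurable_expExpIntegral (α : ℝ) : Measurable (expExpIntegral α) :=
  (StronglyMeasurable.integral_prod_right (ν := volume.restrict (Ioi 0))
    (f := fun t u => exp (-(t * exp u)) * exp (-(α * u)))
    (by fun_prop : Continuous _).stronglyMeasurable).measurable

lemma expExpIntegral_eq_rpow_mul_integral {α t : ℝ} (ht : 0 < t) :
    expExpIntegral α t = t ^ α * ∫ v in Ioi t, exp (-v) * v ^ (-α - 1) := by
  have himage : (fun u => t * exp u) '' Ioi 0 = Ioi t := by
    rw [show (fun u => t * exp u) = (t * ·) ∘ exp from rfl, image_comp, image_exp_Ioi, exp_zero,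
      image_mul_left_Ioi ht, mul_one]
  rw [← himage, integral_image_eq_integral_abs_deriv_smul measurableSet_Ioi
      (fun u _ => ((hasDerivAt_exp u).const_mul t).hasDerivWithinAt)
      (fun a _ b _ h => exp_injective (mul_left_cancel₀ ht.ne' h)),
    ← integral_const_mul, expExpIntegral]
  refine setIntegral_congr_fun measurableSet_Ioi fun u _ => ?_
  have htu : 0 < t * exp u := by positivity
  have hpow : (t * exp u) ^ (-α - 1) = t ^ (-α) * exp (-(α * u)) * (t * exp u)⁻¹ := by
    rw [rpow_sub htu, rpow_one, mul_rpow ht.le (exp_pos u).le, ← exp_mul, rpow_neg ht.le]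
    ring_nf
  rw [smul_eq_mul, abs_of_pos htu, hpow, rpow_neg ht.le]
  field_simp

lemma integrableOn_exp_neg_mul_rpow_Ioi {t r : ℝ} (ht : 0 < t) (hr : r ≤ 0) :
    IntegrableOn (fun v => exp (-v) * v ^ r) (Ioi t) := by
  have hexp : IntegrableOn (fun v => exp (-v)) (Ioi t) := by
    simpa using exp_neg_integrableOn_Ioi t one_pos
  refine Integrable.mono' (hexp.const_mul (t ^ r))
    (by fun_prop : Measurable fun v : ℝ => exp (-v) * v ^ r).aestronglyMeasurable ?_
  filter_upwards [ae_restrict_mem measurableSet_Ioi] with v (hv : t < v)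
  rw [norm_of_nonneg (mul_nonneg (exp_pos _).le (rpow_nonneg (ht.trans hv).le _)),
    mul_comm (t ^ r)]
  exact mul_le_mul_of_nonneg_left
    (antitoneOn_rpow_Ioi_of_exponent_nonpos hr ht (ht.trans hv) hv.le) (exp_pos _).le

lemma mul_integral_Ioi_exp_neg_mul_rpow_sub_one {α t : ℝ} (hα : 0 < α) (ht : 0 < t) :
    α * ∫ v in Ioi t, exp (-v) * v ^ (-α - 1)
      = exp (-t) * t ^ (-α) - ∫ v in Ioi t, exp (-v) * v ^ (-α) := by
  have hint₀ := integrableOn_exp_neg_mul_rpow_Ioi ht (r := -α) (by linarith)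
  have hint₁ := integrableOn_exp_neg_mul_rpow_Ioi ht (r := -α - 1) (by linarith)
  have hderiv : ∀ v ∈ Ioi t, HasDerivAt (fun v => -(exp (-v) * v ^ (-α)))
      (exp (-v) * v ^ (-α) + α * (exp (-v) * v ^ (-α - 1))) v := by
    intro v (hv : t < v)
    have := ((hasDerivAt_neg v).exp.mul
      (hasDerivAt_rpow_const (p := -α) (Or.inl (ht.trans hv).ne'))).neg
    exact this.congr_deriv (by ring)
  have hlim : Tendsto (fun v => -(exp (-v) * v ^ (-α))) atTop (𝓝 0) := by
    simpa using (tendsto_exp_neg_atTop_nhds_zero.mul (tendsto_rpow_neg_atTop hα)).neg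
  have hcont : ContinuousWithinAt (fun v => -(exp (-v) * v ^ (-α))) (Ici t) t :=
    ((continuous_exp.comp continuous_neg).continuousAt.mul
      (continuousAt_rpow_const _ _ (Or.inl ht.ne'))).neg.continuousWithinAt
  have key := integral_Ioi_of_hasDerivAt_of_tendsto hcont hderiv
    (hint₀.add (hint₁.const_mul α)) hlim
  rw [integral_add hint₀ (hint₁.const_mul α), integral_const_mul] at key
  linarith

lemma integral_Ioi_exp_neg_mul_rpow_eq_Gamma_sub {s t : ℝ} (hs : 0 < s) (ht : 0 ≤ t) :
    ∫ v in Ioi t, exp (-v) * v ^ (s - 1)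
      = Gamma s - ∫ v in Ioc 0 t, exp (-v) * v ^ (s - 1) := by
  have hint : IntegrableOn (fun v => exp (-v) * v ^ (s - 1)) (Ioi 0) :=
    GammaIntegral_convergent hs
  rw [Gamma_eq_integral hs, ← Ioc_union_Ioi_eq_Ioi ht,
    setIntegral_union (Ioc_disjoint_Ioi le_rfl) measurableSet_Ioi
      (hint.mono_set Ioc_subset_Ioi_self) (hint.mono_set (Ioi_subset_Ioi ht))]
  ring

lemma expExpIntegral_eq {α t : ℝ} (hα0 : 0 < α) (hα1 : α < 1) (ht : 0 < t) :
    expExpIntegral α t = 1 / α + Gamma (-α) * t ^ α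
      + ((exp (-t) - 1) / α + t ^ α / α * ∫ v in Ioc 0 t, exp (-v) * v ^ (-α)) := by
  have hibp := mul_integral_Ioi_exp_neg_mul_rpow_sub_one hα0 ht
  have hsplit := integral_Ioi_exp_neg_mul_rpow_eq_Gamma_sub (s := 1 - α) (by linarith) ht.le
  have hGamma : Gamma (1 - α) = -α * Gamma (-α) := by
    simpa [neg_add_eq_sub] using Gamma_add_one (neg_ne_zero.mpr hα0.ne')
  have hpow : t ^ α * t ^ (-α) = 1 := by rw [← rpow_add ht]; simp
  rw [sub_sub_cancel_left, hGamma] at hsplit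
  rw [expExpIntegral_eq_rpow_mul_integral ht]
  field_simp
  linear_combination t ^ α * hibp - t ^ α * hsplit + exp (-t) * hpow

lemma integral_Ioc_exp_neg_mul_rpow_le {α t : ℝ} (hα1 : α < 1) (ht : 0 ≤ t) :
    ∫ v in Ioc 0 t, exp (-v) * v ^ (-α) ≤ t ^ (1 - α) / (1 - α) := by
  have hrpow : IntegrableOn (fun v : ℝ => v ^ (-α)) (Ioc 0 t) := by
    rw [← intervalIntegrable_iff_integrableOn_Ioc_of_le ht]
    exact intervalIntegral.intervalIntegrable_rpow' (by linarith)
  have hexp_rpow : IntegrableOn (fun v => exp (-v) * v ^ (-α)) (Ioc 0 t) := by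
    simpa using (GammaIntegral_convergent (s := 1 - α) (by linarith)).mono_set
      (Ioc_subset_Ioi_self : Ioc 0 t ⊆ Ioi 0)
  calc ∫ v in Ioc 0 t, exp (-v) * v ^ (-α)
      ≤ ∫ v in Ioc 0 t, v ^ (-α) := by
        refine setIntegral_mono_on hexp_rpow hrpow measurableSet_Ioc fun v hv => ?_
        exact mul_le_of_le_one_left (rpow_nonneg hv.1.le _)
          (exp_le_one_iff.mpr (by linarith [hv.1]))
    _ = t ^ (1 - α) / (1 - α) := by
        rw [← intervalIntegral.integral_of_le ht, integral_rpow (Or.inl (by linarith)),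
          zero_rpow (by linarith), neg_add_eq_sub]
        ring

lemma abs_expExpIntegral_sub_le {α t : ℝ} (hα0 : 0 < α) (hα1 : α < 1) (ht : 0 < t) :
    |expExpIntegral α t - (1 / α + Gamma (-α) * t ^ α)| ≤ (1 / α + 1 / (α * (1 - α))) * t := by
  set J := ∫ v in Ioc 0 t, exp (-v) * v ^ (-α)
  have hJ0 : 0 ≤ J := setIntegral_nonneg measurableSet_Ioc
    fun v hv => mul_nonneg (exp_pos _).le (rpow_nonneg hv.1.le _)
  have hJ : t ^ α / α * J ≤ 1 / (α * (1 - α)) * t := by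
    have hpow : t ^ α * t ^ (1 - α) = t := by rw [← rpow_add ht]; simp
    calc t ^ α / α * J ≤ t ^ α / α * (t ^ (1 - α) / (1 - α)) :=
          mul_le_mul_of_nonneg_left (integral_Ioc_exp_neg_mul_rpow_le hα1 ht.le) (by positivity)
      _ = 1 / (α * (1 - α)) * (t ^ α * t ^ (1 - α)) := by field_simp
      _ = 1 / (α * (1 - α)) * t := by rw [hpow]
  have hexp : |(exp (-t) - 1) / α| ≤ 1 / α * t := by
    rw [abs_div, abs_of_pos hα0, abs_of_nonpos (by simp [ht.le]), neg_sub, one_div_mul_eq_div]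
    gcongr
    linarith [add_one_le_exp (-t)]
  rw [expExpIntegral_eq hα0 hα1 ht, add_sub_cancel_left]
  calc |(exp (-t) - 1) / α + t ^ α / α * J|
      ≤ |(exp (-t) - 1) / α| + |t ^ α / α * J| := abs_add_le _ _
    _ ≤ 1 / α * t + 1 / (α * (1 - α)) * t := by
        rw [abs_of_nonneg (by positivity : 0 ≤ t ^ α / α * J)]; linarith
    _ = (1 / α + 1 / (α * (1 - α))) * t := by ring

lemma integrableOn_exp_mul_norm_of_norm_le_exp_neg_mul {E : Type*} [NormedAddCommGroup E]
    {F : ℝ → E} {σ C u₀ : ℝ} (hloc : LocallyIntegrableOn F (Ici 0)) (hσ : 1 < σ)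
    (hF : ∀ u, u₀ ≤ u → ‖F u‖ ≤ C * exp (-(σ * u))) :
    IntegrableOn (fun u => exp u * ‖F u‖) (Ioi 0) := by
  set M := max u₀ 0
  have hnear : IntegrableOn (fun u => exp u * ‖F u‖) (Ioc 0 M) :=
    (IntegrableOn.continuousOn_mul continuous_exp.continuousOn
      (hloc.integrableOn_compact_subset Icc_subset_Ici_self isCompact_Icc).norm
      isCompact_Icc).mono_set Ioc_subset_Icc_self
  have hfar : IntegrableOn (fun u => exp u * ‖F u‖) (Ioi M) := by
    refine Integrable.mono' ((exp_neg_integrableOn_Ioi M (by linarith : 0 < σ - 1)).const_mul C)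
      ((continuous_exp.aestronglyMeasurable.mul hloc.aestronglyMeasurable.norm).mono_set
        (Ioi_subset_Ici (le_max_right u₀ 0))) ?_
    filter_upwards [ae_restrict_mem measurableSet_Ioi] with u (hu : M < u)
    calc ‖exp u * ‖F u‖‖ = exp u * ‖F u‖ := norm_of_nonneg (by positivity)
      _ ≤ exp u * (C * exp (-(σ * u))) :=
        mul_le_mul_of_nonneg_left (hF u ((le_max_left u₀ 0).trans hu.le)) (exp_pos u).le
      _ = C * exp (-(σ - 1) * u) := by rw [mul_left_comm, ← exp_add]; ring_nf
  rw [← Ioc_union_Ioi_eq_Ioi (le_max_right u₀ 0)]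
  exact hnear.union hfar

lemma integrableOn_of_integrableOn_exp_mul_norm {E : Type*} [NormedAddCommGroup E] {F : ℝ → E}
    (hFm : AEStronglyMeasurable F (volume.restrict (Ioi 0)))
    (hF : IntegrableOn (fun u => exp u * ‖F u‖) (Ioi 0)) : IntegrableOn F (Ioi 0) := by
  refine Integrable.mono' hF hFm ?_
  filter_upwards [ae_restrict_mem measurableSet_Ioi] with u (hu : 0 < u)
  exact le_mul_of_one_le_left (norm_nonneg _) (one_le_exp hu.le)

lemma integrableOn_ofReal_mul_of_abs_le_mul_exp {F : ℝ → ℂ} {w : ℝ → ℝ} {c : ℝ}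
    (hFm : AEStronglyMeasurable F (volume.restrict (Ioi 0)))
    (hF : IntegrableOn (fun u => exp u * ‖F u‖) (Ioi 0)) (hwm : Measurable w)
    (hw : ∀ u > 0, |w u| ≤ c * exp u) : IntegrableOn (fun u => (w u : ℂ) * F u) (Ioi 0) := by
  refine Integrable.mono' (hF.const_mul c)
    ((Complex.measurable_ofReal.comp hwm).aestronglyMeasurable.mul hFm) ?_
  filter_upwards [ae_restrict_mem measurableSet_Ioi] with u hu
  rw [norm_mul, Complex.norm_real, norm_eq_abs, ← mul_assoc]
  exact mul_le_mul_of_nonneg_right (hw u hu) (norm_nonneg _)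

lemma norm_integral_ofReal_mul_le_of_abs_le_mul_exp {F : ℝ → ℂ} {w : ℝ → ℝ} {c : ℝ}
    (hF : IntegrableOn (fun u => exp u * ‖F u‖) (Ioi 0)) (hw : ∀ u > 0, |w u| ≤ c * exp u) :
    ‖∫ u in Ioi 0, (w u : ℂ) * F u‖ ≤ c * ∫ u in Ioi 0, exp u * ‖F u‖ := by
  rw [← integral_const_mul]
  refine norm_integral_le_of_norm_le (hF.const_mul c) ?_
  filter_upwards [ae_restrict_mem measurableSet_Ioi] with u hu
  rw [norm_mul, Complex.norm_real, norm_eq_abs, ← mul_assoc]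
  exact mul_le_mul_of_nonneg_right (hw u hu) (norm_nonneg _)

lemma integral_Ioi_integral_Ioi_eq_integral_expExpIntegral {α ε X Z : ℝ} (hα : 0 < α)
    (hε : 0 ≤ ε) (hX : 0 ≤ X) (hZ : 0 ≤ Z) {F : ℝ → ℂ} (hF : IntegrableOn F (Ioi 0)) :
    ∫ u₁ in Ioi (0:ℝ), ∫ u₂ in Ioi (0:ℝ),
        (exp (-(ε * (X * exp u₁ + Z * exp (u₁ + u₂)))) : ℂ) * F u₂ * (exp (-(α * u₁)) : ℂ)
      = ∫ u in Ioi 0, (expExpIntegral α (ε * (X + Z * exp u)) : ℂ) * F u := by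
  set f : ℝ → ℝ → ℂ := fun u₁ u₂ =>
    ((exp (-(ε * (X + Z * exp u₂) * exp u₁)) * exp (-(α * u₁)) : ℝ) : ℂ) * F u₂
  have hexp : IntegrableOn (fun u => exp (-(α * u))) (Ioi 0) := by
    simpa [neg_mul] using exp_neg_integrableOn_Ioi 0 hα
  have hint : Integrable (Function.uncurry f)
      ((volume.restrict (Ioi 0)).prod (volume.restrict (Ioi 0))) := by
    refine Integrable.mono' (hexp.mul_prod hF.norm)
      ((Complex.continuous_ofReal.comp (by fun_prop)).aestronglyMeasurable.mul
        hF.aestronglyMeasurable.comp_snd) (Eventually.of_forall fun p => ?_)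
    simp only [Function.uncurry, f, norm_mul, Complex.norm_real, norm_of_nonneg (exp_pos _).le]
    gcongr
    exact mul_le_of_le_one_left (exp_pos _).le
      (exp_le_one_iff.mpr (neg_nonpos.mpr (by positivity)))
  calc _ = ∫ u₁ in Ioi (0:ℝ), ∫ u₂ in Ioi (0:ℝ), f u₁ u₂ := by
        refine integral_congr_ae (Eventually.of_forall fun u₁ => ?_)
        refine integral_congr_ae (Eventually.of_forall fun u₂ => ?_)
        simp only [f, exp_add]
        push_cast
        ring_nf
    _ = ∫ u₂ in Ioi (0:ℝ), ∫ u₁ in Ioi (0:ℝ), f u₁ u₂ := integral_integral_swap hint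
    _ = _ := by
        refine integral_congr_ae (Eventually.of_forall fun u₂ => ?_)
        simp only [f, integral_mul_const, expExpIntegral]
        exact congrArg (· * F u₂) integral_ofReal

lemma norm_integral_expExpIntegral_mul_sub_le {α ε X Z : ℝ} (hα0 : 0 < α) (hα1 : α < 1)
    (hε : 0 < ε) (hX : 0 < X) (hZ : 0 ≤ Z) {F : ℝ → ℂ}
    (hFm : AEStronglyMeasurable F (volume.restrict (Ioi 0)))
    (hF : IntegrableOn (fun u => exp u * ‖F u‖) (Ioi 0)) :
    ‖(∫ u in Ioi 0, (expExpIntegral α (ε * (X + Z * exp u)) : ℂ) * F u)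
        - ((1 / α : ℝ) : ℂ) * (∫ u in Ioi 0, F u)
        - ((Gamma (-α) : ℝ) : ℂ) * (∫ u in Ioi 0, (((Z * exp u + X) ^ α : ℝ) : ℂ) * F u)
          * ((ε ^ α : ℝ) : ℂ)‖
      ≤ (1 / α + 1 / (α * (1 - α))) * (X + Z) * (∫ u in Ioi 0, exp u * ‖F u‖) * ε := by
  set K := 1 / α + 1 / (α * (1 - α))
  set r : ℝ → ℝ := fun u =>
    expExpIntegral α (ε * (X + Z * exp u)) - (1 / α + Gamma (-α) * (ε * (X + Z * exp u)) ^ α)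
  have hr : ∀ u > 0, |r u| ≤ K * ε * (X + Z) * exp u := fun u hu => by
    have hXZ : X + Z * exp u ≤ (X + Z) * exp u := by nlinarith [one_le_exp hu.le]
    calc |r u| ≤ K * (ε * (X + Z * exp u)) :=
          abs_expExpIntegral_sub_le hα0 hα1 (by positivity)
      _ ≤ K * ε * (X + Z) * exp u := by
          rw [mul_assoc K, mul_assoc K, mul_assoc ε]; gcongr
  have hpow : ∀ u > 0, |(Z * exp u + X) ^ α| ≤ (1 + Z + X) * exp u := fun u hu => by
    have hw : 0 ≤ Z * exp u + X := by positivity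
    have hle : (Z * exp u + X) ^ α ≤ 1 + (Z * exp u + X) := by
      rcases le_total (Z * exp u + X) 1 with h | h
      · linarith [rpow_le_one hw h hα0.le]
      · linarith [rpow_le_self_of_one_le h hα1.le]
    rw [abs_of_nonneg (rpow_nonneg hw α)]
    nlinarith [one_le_exp hu.le]
  have hFint := integrableOn_of_integrableOn_exp_mul_norm hFm hF
  have hpowint := integrableOn_ofReal_mul_of_abs_le_mul_exp hFm hF (by fun_prop) hpow
  have hrint : IntegrableOn (fun u => (r u : ℂ) * F u) (Ioi 0) :=
    integrableOn_ofReal_mul_of_abs_le_mul_exp hFm hF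
      (((measurable_expExpIntegral α).comp (by fun_prop)).sub (by fun_prop)) hr
  have hsplit : ∫ u in Ioi 0, (expExpIntegral α (ε * (X + Z * exp u)) : ℂ) * F u
      = (∫ u in Ioi 0, (r u : ℂ) * F u) + ((1 / α : ℝ) : ℂ) * (∫ u in Ioi 0, F u)
        + ((Gamma (-α) : ℝ) : ℂ) * (∫ u in Ioi 0, (((Z * exp u + X) ^ α : ℝ) : ℂ) * F u)
          * ((ε ^ α : ℝ) : ℂ) := by
    have hpt : ∀ u, (expExpIntegral α (ε * (X + Z * exp u)) : ℂ) * F u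
        = (r u : ℂ) * F u + ((1 / α : ℝ) : ℂ) * F u
          + ((Gamma (-α) : ℝ) : ℂ) * ((((Z * exp u + X) ^ α : ℝ) : ℂ) * F u) * ((ε ^ α : ℝ) : ℂ) :=
      fun u => by
        simp only [r]
        rw [mul_rpow hε.le (by positivity : 0 ≤ X + Z * exp u), add_comm X]
        push_cast
        ring
    have hint : IntegrableOn (fun u => (r u : ℂ) * F u + ((1 / α : ℝ) : ℂ) * F u) (Ioi 0) :=
      hrint.add (hFint.const_mul _)
    rw [integral_congr_ae (Eventually.of_forall hpt),
      integral_add hint ((hpowint.const_mul _).mul_const _),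
      integral_add hrint (hFint.const_mul _), integral_mul_const, integral_const_mul,
      integral_const_mul]
  rw [hsplit, show ∀ a b c : ℂ, a + b + c - b - c = a from fun a b c => by ring]
  calc _ ≤ K * ε * (X + Z) * ∫ u in Ioi 0, exp u * ‖F u‖ :=
        norm_integral_ofReal_mul_le_of_abs_le_mul_exp hF hr
    _ = _ := by ring

theorem asympt_exponential_weight_general (X Z : ℝ) (hX : 0 < X) (hZ : 0 < Z)
    (α σ : ℝ) (hα0 : 0 < α) (hα1 : α < 1) (hσ : 1 < σ) (F : ℝ → ℂ)
    (hFloc : MeasureTheory.LocallyIntegrableOn F (Set.Ici 0))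
    (C₁ u₀ : ℝ) (hF : ∀ u : ℝ, u₀ ≤ u → ‖F u‖ ≤ C₁ * Real.exp (-(σ * u))) :
    ∃ C ε₀ : ℝ, 0 < ε₀ ∧ ∀ ε : ℝ, 0 < ε → ε ≤ ε₀ →
      ‖(∫ u₁ in Set.Ioi (0:ℝ), ∫ u₂ in Set.Ioi (0:ℝ),
            (Real.exp (-(ε * (X * Real.exp u₁ + Z * Real.exp (u₁ + u₂)))) : ℂ) * F u₂ *
              (Real.exp (-(α * u₁)) : ℂ))
          - ((1 / α : ℝ) : ℂ) * (∫ u in Set.Ioi (0:ℝ), F u)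
          - ((Real.Gamma (-α) : ℝ) : ℂ) *
              (∫ u in Set.Ioi (0:ℝ), (((Z * Real.exp u + X) ^ α : ℝ) : ℂ) * F u) *
              ((ε ^ α : ℝ) : ℂ)‖ ≤ C * ε := by
  have hFm : AEStronglyMeasurable F (volume.restrict (Ioi 0)) :=
    hFloc.aestronglyMeasurable.mono_set Ioi_subset_Ici_self
  have hexpF := integrableOn_exp_mul_norm_of_norm_le_exp_neg_mul hFloc hσ hF
  refine ⟨(1 / α + 1 / (α * (1 - α))) * (X + Z) * ∫ u in Ioi 0, exp u * ‖F u‖, 1, one_pos,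
    fun ε hε _ => ?_⟩
  rw [integral_Ioi_integral_Ioi_eq_integral_expExpIntegral hα0 hε.le hX.le hZ.le
    (integrableOn_of_integrableOn_exp_mul_norm hFm hexpF)]
  exact norm_integral_expExpIntegral_mul_sub_le hα0 hα1 hε hX hZ.le hFm hexpF

/-- Step 5 of Appendix B: for `X, Z > 0`, `0 < α < 1 < σ` and `F`
measurable, locally integrable with `F(u) = O(e^{−σu})` as `u → +∞`, as `ε → 0+`,
`∫₀^∞∫₀^∞ exp(−ε(Xe^{u₁}+Ze^{u₁+u₂})) F(u₂) e^{−αu₁} du₁ du₂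
  = (1/α) ∫₀^∞ F + Γ(−α)(∫₀^∞ (Ze^u+X)^α F(u) du) ε^α + O(ε)`. -/
theorem asympt_exponential_weight (X Z : ℝ) (hX : 0 < X) (hZ : 0 < Z)
    (α σ : ℝ) (hα0 : 0 < α) (hα1 : α < 1) (hσ : 1 < σ) (F : ℝ → ℂ)
    (hFmeas : Measurable F)
    (hFloc : MeasureTheory.LocallyIntegrableOn F (Set.Ici 0))
    (C₁ u₀ : ℝ) (hF : ∀ u : ℝ, u₀ ≤ u → ‖F u‖ ≤ C₁ * Real.exp (-(σ * u))) :
    ∃ C ε₀ : ℝ, 0 < ε₀ ∧ ∀ ε : ℝ, 0 < ε → ε ≤ ε₀ →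
      ‖(∫ u₁ in Set.Ioi (0:ℝ), ∫ u₂ in Set.Ioi (0:ℝ),
            (Real.exp (-(ε * (X * Real.exp u₁ + Z * Real.exp (u₁ + u₂)))) : ℂ) * F u₂ *
              (Real.exp (-(α * u₁)) : ℂ))
          - ((1 / α : ℝ) : ℂ) * (∫ u in Set.Ioi (0:ℝ), F u)
          - ((Real.Gamma (-α) : ℝ) : ℂ) *
              (∫ u in Set.Ioi (0:ℝ), (((Z * Real.exp u + X) ^ α : ℝ) : ℂ) * F u) *
              ((ε ^ α : ℝ) : ℂ)‖ ≤ C * ε :=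
  asympt_exponential_weight_general X Z hX hZ α σ hα0 hα1 hσ F hFloc C₁ u₀ hF
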